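/- arXiv:2402.19223 — 2 statements merged into one kernel-verified Lean document; each statement's English description precedes it below -/
import Mathlib

section
/- For every i ≥ 1, the Lyndon factorization of ℓ_i with its last character removed is φ^{i-1}(a), φ^{i-2}(a), …, φ^0(a), where ℓ_1 = ab and ℓ_{k+1} = φ(ℓ_k). -/
/-! `φ` is strictly monotone for the lexicographic order, and a suffix of `φ(w)` is the image of a
suffix of `w`, possibly preceded by `ab` or `b`. Hence `φ` maps Lyndon words beginning with `a` to
Lyndon words, and every `φ^j(a)` is Lyndon. Since `φ(a) = a·ab`, each `φ^j(a)` is a prefix of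
`φ^(j+1)(a)`, so the list `φ^(i-1)(a), …, φ^0(a)` is non-increasing. Finally `ℓ_i = φ^i(b)` and
`φ^(n+1)(b) = φ^n(a) φ^n(b)`, which unfolds to `ℓ_i = φ^(i-1)(a) ⋯ φ^0(a) b`. -/

/-- Strings over the binary alphabet `{a, b}`: `false` is `a`, `true` is `b`. -/
abbrev Word := List Bool

/-- `w` is primitive if it is not of the form `x^j` for any `j ≥ 2`. -/
def Primitive (w : Word) : Prop := ¬ ∃ (x : Word) (j : ℕ), 2 ≤ j ∧ w = (List.replicate j x).flatten

/-- `u` occurs in `w` at (0-indexed) position `i`. -/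
def occursAt (u w : Word) (i : ℕ) : Prop :=
  i + u.length ≤ w.length ∧ (w.drop i).take u.length = u

instance (u w : Word) (i : ℕ) : Decidable (occursAt u w i) := by
  unfold occursAt; infer_instance

/-- Fibonacci words: `F 1 = b`, `F 2 = a`, `F (k+1) = F k ++ F (k-1)`. -/
def F : ℕ → Word
  | 0 => []
  | 1 => [true]
  | 2 => [false]
  | (n+3) => F (n+2) ++ F (n+1)

/-- Fibonacci numbers with `f 1 = f 2 = 1`. -/
def f : ℕ → ℕ
  | 0 => 0
  | 1 => 1
  | (n+2) => f (n+1) + f n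

/-- The morphism `φ(a) = aab`, `φ(b) = ab`. -/
def phi (w : Word) : Word := w.flatMap fun c => if c then [false, true] else [false, false, true]

/-- Lexicographic order on words induced by `a < b` (a proper prefix is smaller). -/
def wlt (x y : Word) : Prop := List.Lex (· < ·) x y

/-- `u` is a border of `w`: a proper substring that is both a prefix and a suffix. -/
def IsBorder (u w : Word) : Prop := u ≠ w ∧ u <+: w ∧ u <:+ w

/-- `w` is a Lyndon word: it is smaller than all of its proper nonempty suffixes. -/
def IsLyndon (w : Word) : Prop := ∀ s : Word, s <:+ w → s ≠ [] → s ≠ w → wlt w s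

/-- `fs` is the Lyndon factorization of `w`: a factorization into nonempty Lyndon
words that is lexicographically non-increasing (powers written as repetitions). -/
def IsLyndonFactorization (w : Word) (fs : List Word) : Prop :=
  fs.flatten = w ∧ (∀ x ∈ fs, IsLyndon x ∧ x ≠ []) ∧ List.Chain' (fun x y => ¬ wlt x y) fs

/-- `ℓ 1 = ab`, `ℓ (k+1) = φ (ℓ k)`. -/
def ell : ℕ → Word
  | 0 => []
  | 1 => [false, true]
  | (n+2) => phi (ell (n+1))

@[simp]
lemma phi_nil : phi [] = [] := rfl

@[simp]
lemma phi_append (x y : Word) : phi (x ++ y) = phi x ++ phi y := by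
  simp [phi]

@[simp]
lemma phi_cons (c : Bool) (w : Word) :
    phi (c :: w) = (if c then [false, true] else [false, false, true]) ++ phi w := by
  simp [phi]

lemma phi_eq_nil_iff {w : Word} : phi w = [] ↔ w = [] := by
  cases w with
  | nil => simp
  | cons c w => cases c <;> simp

lemma iterate_phi_append (j : ℕ) (x y : Word) :
    phi^[j] (x ++ y) = phi^[j] x ++ phi^[j] y := by
  induction j generalizing x y with
  | zero => rfl
  | succ j ih => simp only [Function.iterate_succ_apply, phi_append, ih]

lemma List.Lex.eq_append_or_exists {α : Type*} {r : α → α → Prop} {l₁ l₂ : List α}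
    (h : List.Lex r l₁ l₂) :
    (∃ t ≠ [], l₂ = l₁ ++ t) ∨
      ∃ p a b s₁ s₂, r a b ∧ l₁ = p ++ a :: s₁ ∧ l₂ = p ++ b :: s₂ := by
  induction h with
  | @nil a l => exact Or.inl ⟨a :: l, List.cons_ne_nil a l, rfl⟩
  | @rel a l₁ b l₂ hab => exact Or.inr ⟨[], a, b, l₁, l₂, hab, rfl, rfl⟩
  | @cons a l₁ l₂ _ ih =>
    rcases ih with ⟨t, ht, rfl⟩ | ⟨p, a', b', s₁, s₂, hab, rfl, rfl⟩
    · exact Or.inl ⟨t, ht, rfl⟩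
    · exact Or.inr ⟨a :: p, a', b', s₁, s₂, hab, rfl, rfl⟩

/-- At a first mismatch `a`/`b` the images continue with `aab`/`ab`, which mismatch again. -/
lemma wlt_phi_phi {x y : Word} (h : wlt x y) : wlt (phi x) (phi y) := by
  rcases List.Lex.eq_append_or_exists h with ⟨t, ht, rfl⟩ | ⟨p, a, b, s₁, s₂, hab, rfl, rfl⟩
  · obtain ⟨c, u, hcu⟩ := List.exists_cons_of_ne_nil (mt phi_eq_nil_iff.mp ht)
    simpa [wlt, hcu] using List.append_left_lt (l₁ := phi x) (List.nil_lt_cons c u)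
  · obtain ⟨rfl, rfl⟩ : a = false ∧ b = true := by revert hab; cases a <;> cases b <;> decide
    simpa [wlt] using
      List.append_left_lt (l₁ := phi p) (List.Lex.cons (List.Lex.rel (by decide)))

/-- `ab` and `b` are the proper nonempty suffixes of the blocks `φ(a) = aab` and `φ(b) = ab`. -/
lemma exists_suffix_of_suffix_phi {s w : Word} (hs : s <:+ phi w) :
    ∃ v, v <:+ w ∧ (s = phi v ∨ s = false :: true :: phi v ∨ s = true :: phi v) := by
  induction w with
  | nil => exact ⟨[], List.suffix_refl _, Or.inl (List.suffix_nil.mp hs)⟩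
  | cons c w ih =>
    obtain ⟨p, hp⟩ := hs
    rw [phi_cons] at hp
    rcases List.append_eq_append_iff.mp hp with ⟨t, hblock, rfl⟩ | ⟨q, -, hq⟩
    · have ht : t <:+ (if c then [false, true] else [false, false, true]) := ⟨p, hblock.symm⟩
      rw [← List.mem_tails] at ht
      -- `t` is the whole block (take `v = c :: w`) or a proper suffix of it (take `v = w`)
      cases c <;> simp at ht <;> rcases ht with rfl | rfl | rfl | rfl <;>
        first
        | (refine ⟨_, List.suffix_refl _, ?_⟩; simp; done)
        | (refine ⟨w, List.suffix_cons _ w, ?_⟩; simp)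
    · obtain ⟨v, hv, hs⟩ := ih ⟨q, hq.symm⟩
      exact ⟨v, hv.trans (List.suffix_cons c w), hs⟩

lemma isLyndon_singleton (c : Bool) : IsLyndon [c] := by
  intro s hs hne hnw
  rw [← List.mem_tails] at hs
  simp_all

lemma phi_false_cons (x : Word) : phi (false :: x) = false :: false :: true :: phi x := by
  simp

lemma isLyndon_phi_false_cons {x : Word} (hx : IsLyndon (false :: x)) :
    IsLyndon (phi (false :: x)) := by
  intro s hs hne hnw
  obtain ⟨v, hv, rfl | rfl | rfl⟩ := exists_suffix_of_suffix_phi hs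
  · exact wlt_phi_phi (hx v hv (mt (congrArg phi) hne) (mt (congrArg phi) hnw))
  · rw [phi_false_cons]
    exact List.Lex.cons (List.Lex.rel (by decide))
  · rw [phi_false_cons]
    exact List.Lex.rel (by decide)

lemma exists_iterate_phi_false_eq_cons (j : ℕ) : ∃ x, phi^[j] [false] = false :: x := by
  induction j with
  | zero => exact ⟨[], rfl⟩
  | succ j ih =>
    obtain ⟨x, hx⟩ := ih
    exact ⟨_, by rw [Function.iterate_succ_apply', hx, phi_false_cons]⟩

lemma isLyndon_iterate_phi_false (j : ℕ) : IsLyndon (phi^[j] [false]) := by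
  induction j with
  | zero => exact isLyndon_singleton false
  | succ j ih =>
    obtain ⟨x, hx⟩ := exists_iterate_phi_false_eq_cons j
    rw [Function.iterate_succ_apply', hx]
    exact isLyndon_phi_false_cons (hx ▸ ih)

lemma iterate_phi_false_prefix {j k : ℕ} (hjk : j ≤ k) : phi^[j] [false] <+: phi^[k] [false] := by
  induction k, hjk using Nat.le_induction with
  | base => exact List.prefix_refl _
  | succ k _ ih =>
    have hsucc : phi^[k + 1] [false] = phi^[k] [false] ++ phi^[k] [false, true] := by
      rw [Function.iterate_succ_apply, ← iterate_phi_append]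
      rfl
    exact ih.trans (hsucc ▸ List.prefix_append _ _)

def phiIterates (n : ℕ) : List Word :=
  (List.range n).reverse.map fun j => phi^[j] [false]

@[simp]
lemma phiIterates_succ (n : ℕ) : phiIterates (n + 1) = phi^[n] [false] :: phiIterates n := by
  simp [phiIterates, List.range_succ]

/-- Unfolding `φ^(n+1)(b) = φ^n(a) φ^n(b)` repeatedly. -/
lemma iterate_phi_true (n : ℕ) : phi^[n] [true] = (phiIterates n).flatten ++ [true] := by
  induction n with
  | zero => rfl
  | succ n ih =>
    rw [Function.iterate_succ_apply, show phi [true] = [false] ++ [true] from rfl,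
      iterate_phi_append, ih, phiIterates_succ, List.flatten_cons, List.append_assoc]

lemma ell_succ (n : ℕ) : ell (n + 1) = phi^[n + 1] [true] := by
  induction n with
  | zero => rfl
  | succ n ih => rw [Function.iterate_succ_apply', ← ih]; rfl

lemma dropLast_ell (i : ℕ) : (ell i).dropLast = (phiIterates i).flatten := by
  cases i with
  | zero => rfl
  | succ n => rw [ell_succ, iterate_phi_true, List.dropLast_concat]

theorem stmt11_general (i : ℕ) :
    IsLyndonFactorization ((ell i).dropLast)
      ((List.range i).reverse.map (fun j => phi^[j] [false])) := by
  refine ⟨(dropLast_ell i).symm, ?_, ?_⟩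
  · simp only [List.mem_map, List.mem_reverse, List.mem_range]
    rintro _ ⟨j, -, rfl⟩
    obtain ⟨x, hx⟩ := exists_iterate_phi_false_eq_cons j
    exact ⟨isLyndon_iterate_phi_false j, hx ▸ List.cons_ne_nil _ _⟩
  · apply List.Pairwise.isChain
    rw [List.pairwise_map, List.pairwise_reverse]
    exact List.pairwise_lt_range.imp fun hjk => (iterate_phi_false_prefix hjk.le).le

/-- For `i ≥ 1`, the Lyndon factorization of `ℓ i` with its last character
removed is `φ^(i-1)(a), …, φ^0(a)`. -/
theorem stmt11 (i : ℕ) (hi : 1 ≤ i) :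
    IsLyndonFactorization ((ell i).dropLast)
      ((List.range i).reverse.map (fun j => phi^[j] [false])) :=
  stmt11_general i
end

section
/- For odd k ≥ 7, with lexicographic order a < b, for every even i with 4 ≤ i ≤ k−3 there is no suffix x of F_k with F_{i+1} < x < F_i·F_{i+1} (i.e., the suffix F_{i+1} of F_k is the immediate lexicographic predecessor, among suffixes of F_k, of the suffix F_i·F_{i+1}). -/
/-!
Since `F i ++ F (i+1) = F (i+1) ++ z` with `z = F (i-2) ++ F (i-1)`, a suffix strictly between
`F (i+1)` and `F i ++ F (i+1)` would be `F (i+1) ++ y` with `y` nonempty and `y < z`. Induction on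
`k` along `F k = F (k-1) ++ F (k-2)` shows that whatever nonempty `y` follows `F (i+1)` at the end
of `F k` is at least `z`. The interesting case is an occurrence of `F (i+1)` straddling the cut:
both of its pieces are borders of Fibonacci words, and the borders of `F n` are exactly the `F j`
with `j ≤ n - 2` and `j ≡ n (mod 2)`, so the lengths force the cut to split `F (i+1)` as
`F i ++ F (i-1)`; the block after the cut starts with `F (i+1) = F (i-1) ++ z`, so `y` starts
with `z`. When `y` is a whole Fibonacci word `F j`, `j ≥ i`, one uses `z < F i` for even `i`: `z`
and `F (i-1) ++ F (i-2) = F i` differ only in their last two letters.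
-/

namespace List

variable {α : Type*}

theorem exists_eq_append_of_suffix_append {x u v : List α} (h : x <:+ u ++ v)
    (hv : v.length ≤ x.length) : ∃ s, s <:+ u ∧ x = s ++ v := by
  obtain ⟨s, rfl⟩ := suffix_of_suffix_length_le (suffix_append u v) h hv
  obtain ⟨p, hp⟩ := h
  exact ⟨s, ⟨p, append_cancel_right (by simpa using hp)⟩, rfl⟩

theorem eq_of_prefix_of_suffix_cons_cons {s t : List α} {a b : α} (hp : s <+: a :: b :: t)
    (hs : s <:+ a :: b :: t) (hl : s.length = t.length + 1) : a = b := by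
  rw [suffix_iff_eq_drop, hl] at hs
  simp only [length_cons, Nat.add_sub_cancel_left, drop_one, tail_cons] at hs
  rw [hs, cons_prefix_cons] at hp
  exact hp.1.symm

variable [LinearOrder α]

theorem append_lt_append_left_iff {l l₁ l₂ : List α} : l ++ l₁ < l ++ l₂ ↔ l₁ < l₂ := by
  induction l with
  | nil => rfl
  | cons a l ih => simpa [cons_lt_cons_iff] using ih

theorem prefix_of_lt_of_lt_append : ∀ {u x z : List α}, u < x → x < u ++ z → u <+: x
  | [], _, _, _, _ => nil_prefix
  | _ :: _, [], _, h, _ => absurd h (not_lt_nil _)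
  | a :: u, b :: x, z, h₁, h₂ => by
    rw [cons_lt_cons_iff] at h₁
    rw [cons_append, cons_lt_cons_iff] at h₂
    rcases h₁ with hab | ⟨rfl, h₁⟩
    · rcases h₂ with hba | ⟨rfl, _⟩
      · exact absurd (hab.trans hba) (lt_irrefl a)
      · exact absurd hab (lt_irrefl b)
    · rcases h₂ with haa | ⟨-, h₂⟩
      · exact absurd haa (lt_irrefl a)
      · exact cons_prefix_cons.mpr ⟨rfl, prefix_of_lt_of_lt_append h₁ h₂⟩

end List

theorem Nat.eq_of_fib_add_fib_eq_fib_add_two {j j' n : ℕ} (hj : 2 ≤ j) (hj' : 2 ≤ j')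
    (hjn : j ≤ n) (h : Nat.fib j + Nat.fib j' = Nat.fib (n + 2)) : j = n ∧ j' = n + 1 := by
  have hfib := Nat.fib_add_two (n := n)
  have hjn' := Nat.fib_mono hjn
  have hn := Nat.fib_lt_fib_succ (n := n) (by omega)
  have hj'1 : n < j' := (Nat.fib_lt_fib (by omega)).mp (by omega)
  have hj_pos := Nat.fib_pos.mpr (by omega : 0 < j)
  have hj'2 : j' < n + 2 := (Nat.fib_lt_fib hj').mp (by omega)
  obtain rfl : j' = n + 1 := by omega
  refine ⟨le_antisymm hjn (not_lt.mp fun hlt => ?_), rfl⟩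
  have := (Nat.fib_lt_fib hj).mpr hlt
  omega

theorem F_add_three (n : ℕ) : F (n + 3) = F (n + 2) ++ F (n + 1) := rfl

theorem length_F : ∀ n, (F n).length = Nat.fib n
  | 0 | 1 | 2 => rfl
  | n + 3 => by
    rw [F_add_three, List.length_append, length_F, length_F, Nat.fib_add_two (n := n + 1),
      add_comm]

theorem F_prefix_F {a b : ℕ} (ha : 2 ≤ a) (hab : a ≤ b) : F a <+: F b := by
  induction b, hab using Nat.le_induction with
  | base => exact List.prefix_refl _
  | succ b hb ih =>
    obtain ⟨c, rfl⟩ : ∃ c, b = c + 2 := ⟨b - 2, by omega⟩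
    exact ih.trans (List.prefix_append _ _)

theorem F_add_three_eq_cons (n : ℕ) : ∃ w, F (n + 3) = false :: true :: w := by
  obtain ⟨w, hw⟩ := F_prefix_F (a := 3) (b := n + 3) (by norm_num) (by omega)
  exact ⟨w, hw.symm⟩

theorem getLast?_F : ∀ n, (F (n + 1)).getLast? = some (decide (n % 2 = 0))
  | 0 | 1 => rfl
  | n + 2 => by
    rw [F_add_three, List.getLast?_append, getLast?_F n]
    simp [Nat.add_mod_right]

theorem F_append_F_ne_F_append_F {a b : ℕ} (ha : 1 ≤ a) (hb : 1 ≤ b) (hab : a % 2 ≠ b % 2) :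
    F a ++ F b ≠ F b ++ F a := by
  obtain ⟨a, rfl⟩ : ∃ c, a = c + 1 := ⟨a - 1, by omega⟩
  obtain ⟨b, rfl⟩ : ∃ c, b = c + 1 := ⟨b - 1, by omega⟩
  intro h
  have := congrArg List.getLast? h
  simp only [List.getLast?_append, getLast?_F, Option.some_or, Option.some.injEq,
    decide_eq_decide] at this
  omega

theorem F_append_F_swap : ∀ n, ∃ (w : Word) (x y : Bool),
    F (n + 1) ++ F (n + 2) = w ++ [x, y] ∧ F (n + 2) ++ F (n + 1) = w ++ [y, x]
  | 0 => ⟨[], true, false, rfl, rfl⟩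
  | n + 1 => by
    obtain ⟨w, x, y, h₁, h₂⟩ := F_append_F_swap n
    refine ⟨F (n + 2) ++ w, y, x, ?_, ?_⟩
    · rw [show F (n + 1 + 1) = F (n + 2) from rfl, F_add_three, h₂,
        List.append_assoc]
    · rw [F_add_three, List.append_assoc, h₁, List.append_assoc]

theorem F_add_three_append_F_add_four (n : ℕ) :
    F (n + 3) ++ F (n + 4) = F (n + 4) ++ (F (n + 1) ++ F (n + 2)) := by
  simp only [F_add_three, List.append_assoc]

theorem F_add_two_append_F_add_three_lt {m : ℕ} (hm : Even m) :
    F (m + 2) ++ F (m + 3) < F (m + 4) := by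
  obtain ⟨w, x, y, h₁, h₂⟩ : ∃ (w : Word) (x y : Bool),
      F (m + 2) ++ F (m + 3) = w ++ [x, y] ∧ F (m + 3) ++ F (m + 2) = w ++ [y, x] :=
    F_append_F_swap (m + 1)
  have hx := congrArg List.getLast? h₂
  have hy := congrArg List.getLast? h₁
  simp only [List.getLast?_append, getLast?_F, Option.some_or, List.getLast?_cons_cons,
    List.getLast?_singleton, Option.some.injEq] at hx hy
  obtain ⟨r, rfl⟩ := hm
  subst hx hy
  rw [show F (r + r + 4) = F (r + r + 3) ++ F (r + r + 2) from rfl, h₁, h₂,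
    List.append_lt_append_left_iff]
  simp [List.cons_lt_cons_iff, show (r + r + 1) % 2 = 1 by omega,
    show (r + r + 2) % 2 = 0 by omega]

theorem F_add_two_append_F_add_three_le_F {m j : ℕ} (hm : Even m) (hj : m + 4 ≤ j) :
    F (m + 2) ++ F (m + 3) ≤ F j :=
  (F_add_two_append_F_add_three_lt hm).le.trans (not_lt.mp (F_prefix_F (by omega) hj).le)

theorem prefix_F_add_three_of_prefix_append {r : Word} {n : ℕ}
    (h : r <+: F (n + 1) ++ F (n + 2)) (hr : r.length + 2 ≤ Nat.fib (n + 3)) : r <+: F (n + 3) := by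
  obtain ⟨w, x, y, h₁, h₂⟩ := F_append_F_swap n
  have hw := congrArg List.length h₂
  simp only [List.length_append, length_F, List.length_cons, List.length_nil] at hw
  have hfib : Nat.fib (n + 3) = Nat.fib (n + 1) + Nat.fib (n + 2) := Nat.fib_add_two
  rw [h₁] at h
  rw [F_add_three, h₂]
  exact (List.prefix_of_prefix_length_le h (List.prefix_append w _) (by omega)).trans
    (List.prefix_append _ _)

theorem IsBorder.length_lt {s w : Word} (h : IsBorder s w) : s.length < w.length :=
  lt_of_le_of_ne h.2.1.length_le fun hl => h.1 (h.2.1.eq_of_length hl)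

theorem length_add_two_le_of_isBorder_F {n : ℕ} {s : Word} (hs : IsBorder s (F (n + 3))) :
    s.length + 2 ≤ Nat.fib (n + 3) := by
  have hlt := hs.length_lt
  obtain ⟨w, hw⟩ := F_add_three_eq_cons n
  have hw' := congrArg List.length hw
  simp only [length_F, List.length_cons] at hlt hw'
  by_contra!
  rw [hw] at hs
  exact absurd (List.eq_of_prefix_of_suffix_cons_cons hs.2.1 hs.2.2 (by omega)) (by decide)

/-- A longer border would be `F j ++ F (n + 2) = F (n + 2) ++ F j` with `j ≢ n (mod 2)`, but the
two sides end in different letters. -/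
theorem length_le_of_isBorder_F_add_four {n : ℕ} {s : Word}
    (ih : ∀ q, IsBorder q (F (n + 3)) → q ≠ [] →
      ∃ j, 2 ≤ j ∧ j + 2 ≤ n + 3 ∧ j % 2 = (n + 3) % 2 ∧ q = F j)
    (hs : IsBorder s (F (n + 4))) : s.length ≤ Nat.fib (n + 2) := by
  have hshort : s.length + 2 ≤ Nat.fib (n + 4) := length_add_two_le_of_isBorder_F (n := n + 1) hs
  obtain ⟨-, hpre, hsuf⟩ := hs
  by_contra! hlong
  have hfib4 : Nat.fib (n + 4) = Nat.fib (n + 2) + Nat.fib (n + 3) := Nat.fib_add_two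
  have h4 : F (n + 4) = F (n + 3) ++ F (n + 2) := rfl
  obtain ⟨q, hq_suf, rfl⟩ := List.exists_eq_append_of_suffix_append
    (h4 ▸ hsuf) (by rw [length_F]; omega)
  rw [List.length_append, length_F] at hlong hshort
  have hq_pre : q <+: F (n + 3) :=
    List.prefix_of_prefix_length_le ((List.prefix_append _ _).trans hpre)
      (h4 ▸ List.prefix_append _ _) (by rw [length_F]; omega)
  obtain ⟨j, hj, hjn, hjpar, rfl⟩ := ih q
    ⟨fun h => by rw [h, length_F] at hshort; omega, hq_pre, hq_suf⟩
    (fun h => by rw [h] at hlong; simp at hlong)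
  rw [length_F] at hlong hshort
  obtain ⟨r, hr⟩ : F (n + 2) <+: F j ++ F (n + 2) :=
    List.prefix_of_prefix_length_le (F_prefix_F (by omega) (by omega)) hpre
      (by simp only [List.length_append, length_F]; omega)
  have hr_len : r.length = Nat.fib j := by
    have := congrArg List.length hr
    simp only [List.length_append, length_F] at this
    omega
  have hr_pre : r <+: F (n + 1) ++ F (n + 2) := by
    rw [← hr, show F (n + 4) = F (n + 2) ++ (F (n + 1) ++ F (n + 2)) by
      simp only [F_add_three, List.append_assoc]] at hpre
    exact (List.prefix_append_right_inj _).mp hpre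
  have hrj : r = F j :=
    (List.prefix_of_prefix_length_le
      (prefix_F_add_three_of_prefix_append hr_pre (by omega)) (F_prefix_F hj (by omega))
      (by rw [hr_len, length_F])).eq_of_length (by rw [hr_len, length_F])
  exact F_append_F_ne_F_append_F (by omega) (by omega) (by omega) (hrj ▸ hr).symm

theorem eq_F_of_isBorder : ∀ n {s : Word}, IsBorder s (F n) → s ≠ [] →
    ∃ j, 2 ≤ j ∧ j + 2 ≤ n ∧ j % 2 = n % 2 ∧ s = F j
  | 0, s, hs, hne | 1, s, hs, hne | 2, s, hs, hne => by
    have : s.length < Nat.fib 2 := hs.length_lt.trans_le ((length_F _).trans_le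
      (Nat.fib_mono (by norm_num)))
    rw [Nat.fib_two] at this
    exact absurd (List.length_eq_zero_iff.mp (by omega)) hne
  | 3, s, hs, hne => by
    have : s.length < Nat.fib 3 := hs.length_lt.trans_eq (length_F _)
    rw [show Nat.fib 3 = 2 by rfl] at this
    have := List.length_pos_iff.mpr hne
    exact absurd (List.eq_of_prefix_of_suffix_cons_cons hs.2.1 hs.2.2
      (by simp only [List.length_nil]; omega)) (by decide)
  | n + 4, s, hs, hne => by
    have hle := length_le_of_isBorder_F_add_four (fun q => eq_F_of_isBorder (n + 3)) hs
    have hpre : s <+: F (n + 2) := List.prefix_of_prefix_length_le hs.2.1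
      (F_prefix_F (by omega) (by omega)) (by rwa [length_F])
    have hsuf : s <:+ F (n + 2) := List.suffix_of_suffix_length_le hs.2.2
      (List.suffix_append _ _) (by rwa [length_F])
    by_cases hs2 : s = F (n + 2)
    · exact ⟨n + 2, by omega, by omega, by omega, hs2⟩
    · obtain ⟨j, hj, hjn, hjpar, rfl⟩ := eq_F_of_isBorder (n + 2) ⟨hs2, hpre, hsuf⟩ hne
      exact ⟨j, hj, by omega, by omega, rfl⟩

theorem eq_F_add_three_of_append_eq_F_add_five {m K : ℕ} {s t : Word} (hs : s ≠ [])
    (ht : t ≠ []) (hst : s ++ t = F (m + 5)) (hsK : s <:+ F (K + 2)) (htK : t <+: F (K + 1))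
    (hK : m + 3 ≤ K) : t = F (m + 3) ∧ m + 4 ≤ K := by
  have hlen := congrArg List.length hst
  rw [List.length_append, length_F] at hlen
  have hs_pos := List.length_pos_iff.mpr hs
  have ht_pos := List.length_pos_iff.mpr ht
  have hmK := Nat.fib_mono (by omega : m + 5 ≤ K + 2)
  have ht_pre : t <+: F (m + 5) :=
    List.prefix_of_prefix_length_le (htK.trans (F_prefix_F (by omega) (le_max_left _ (m + 5))))
      (F_prefix_F (by omega) (le_max_right (K + 1) _)) (by rw [length_F]; omega)
  have hs_pre : s <+: F (K + 2) :=
    (List.prefix_append s t).trans (hst ▸ F_prefix_F (by omega) (by omega))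
  obtain ⟨j, hj, hjm, -, rfl⟩ := eq_F_of_isBorder (m + 5)
    ⟨fun h => by rw [h, length_F] at hlen; omega, ht_pre, ⟨s, hst⟩⟩ ht
  obtain ⟨j', hj', hj'K, -, rfl⟩ := eq_F_of_isBorder (K + 2)
    ⟨fun h => by rw [h, length_F] at hlen; omega, hs_pre, hsK⟩ hs
  rw [length_F, length_F] at hlen
  obtain ⟨rfl, rfl⟩ := Nat.eq_of_fib_add_fib_eq_fib_add_two (n := m + 3) hj hj' (by omega)
    (by rw [add_comm, hlen])
  exact ⟨rfl, by omega⟩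

theorem F_add_two_append_F_add_three_le_of_suffix {m : ℕ} (hm : Even m) :
    ∀ {k : ℕ} {y : Word}, F (m + 5) ++ y <:+ F k → y ≠ [] → F (m + 2) ++ F (m + 3) ≤ y := by
  intro k
  induction k using Nat.strong_induction_on with
  | _ k ih =>
  intro y hsuf hy
  have hlen := hsuf.length_le
  rw [List.length_append, length_F, length_F] at hlen
  have hy_pos := List.length_pos_iff.mpr hy
  have hk : m + 6 ≤ k := by
    by_contra! h
    have := Nat.fib_mono (by omega : k ≤ m + 5)
    omega
  obtain ⟨K, rfl⟩ : ∃ K, k = K + 3 := ⟨k - 3, by omega⟩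
  rcases le_or_gt (F (m + 5) ++ y).length (Nat.fib (K + 1)) with hshort | hlong
  · exact ih (K + 1) (by omega)
      (List.suffix_of_suffix_length_le hsuf (List.suffix_append _ _) (by rwa [length_F])) hy
  obtain ⟨s, hs_suf, hs_eq⟩ := List.exists_eq_append_of_suffix_append (F_add_three K ▸ hsuf)
    (by rw [length_F]; omega)
  have hs : s ≠ [] := by
    rintro rfl
    rw [hs_eq, List.nil_append, length_F] at hlong
    omega
  rcases List.append_eq_append_iff.mp hs_eq with ⟨s', rfl, rfl⟩ | ⟨t, hst, ht⟩
  · rcases eq_or_ne s' [] with rfl | hs'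
    · simpa using F_add_two_append_F_add_three_le_F hm (j := K + 1) (by omega)
    · exact (ih (K + 2) (by omega) hs_suf hs').trans (not_lt.mp List.le_append_left)
  rcases eq_or_ne t [] with rfl | ht'
  · rw [List.nil_append] at ht
    exact ht ▸ F_add_two_append_F_add_three_le_F hm (by omega)
  obtain ⟨rfl, hK⟩ := eq_F_add_three_of_append_eq_F_add_five hs ht' hst.symm hs_suf ⟨y, ht.symm⟩
    (by omega)
  obtain ⟨u, hu⟩ := F_prefix_F (a := m + 5) (b := K + 1) (by omega) (by omega)
  have hy_eq : y = (F (m + 2) ++ F (m + 3)) ++ u := by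
    apply List.append_cancel_left (as := F (m + 3))
    rw [← ht, ← hu]
    simp only [F_add_three, List.append_assoc]
  exact hy_eq ▸ not_lt.mp List.le_append_left

theorem stmt19_general (k i : ℕ) (hieven : Even i) (hi1 : 4 ≤ i) :
    ¬ ∃ x : Word, x <:+ F k ∧ wlt (F (i + 1)) x ∧ wlt x (F i ++ F (i + 1)) := by
  rintro ⟨x, hx, hlo, hhi⟩
  obtain ⟨m, rfl⟩ : ∃ m, i = m + 4 := ⟨i - 4, by omega⟩
  change F (m + 5) < x at hlo
  change x < F (m + 4) ++ F (m + 5) at hhi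
  have hm : Even m := (Nat.even_add.mp hieven).mpr (by decide)
  rw [F_add_three_append_F_add_four (m + 1)] at hhi
  obtain ⟨y, rfl⟩ := List.prefix_of_lt_of_lt_append hlo hhi
  have hy : y ≠ [] := by
    rintro rfl
    rw [List.append_nil] at hlo
    exact lt_irrefl _ hlo
  exact not_lt.mpr (F_add_two_append_F_add_three_le_of_suffix hm hx hy)
    (List.append_lt_append_left_iff.mp hhi)

/-- For odd `k ≥ 7` and even `i` with `4 ≤ i ≤ k−3`, there is no suffix `x` of
`F k` strictly between `F (i+1)` and `F i ++ F (i+1)` in lexicographic order. -/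
theorem stmt19 (k i : ℕ) (hk : 7 ≤ k) (hkodd : Odd k) (hieven : Even i)
    (hi1 : 4 ≤ i) (hi2 : i ≤ k - 3) :
    ¬ ∃ x : Word, x <:+ F k ∧ wlt (F (i + 1)) x ∧ wlt x (F i ++ F (i + 1)) :=
  stmt19_general k i hieven hi1
end
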